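/- Let Ω ⊆ ℂ^d be open and let 𝒳 be a Hausdorff topological vector space of holomorphic functions on Ω satisfying (P1)–(P3). Let 𝒬 ⊆ 𝒫_d be a family of polynomials and ℱ ⊆ 𝒳 a family of functions, and set 𝒬ℱ = {PF : P ∈ 𝒬, F ∈ ℱ}. Then 𝒬ℱ is jointly cyclic in 𝒳 if and only if both 𝒬 and ℱ are jointly cyclic in 𝒳. -/

import Mathlib

/-!
A Hausdorff topological vector space `X` of holomorphic functions on an open set
`Ω ⊆ ℂ^d` satisfying (P1) (polynomials are dense), (P2) (point evaluations at points
of `Ω` are continuous) and (P3) (the shift operators, and hence multiplication by any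
polynomial, are continuous linear self maps).
-/
structure HoloFunSpace (d : ℕ) (Ω : Set (Fin d → ℂ)) (X : Type*)
    [AddCommGroup X] [Module ℂ X] [TopologicalSpace X] where
  /-- The realization of elements of `X` as (holomorphic) functions on `Ω`. -/
  toFun : X →ₗ[ℂ] ((Fin d → ℂ) → ℂ)
  holo : ∀ F : X, DifferentiableOn ℂ (toFun F) Ω
  inj : ∀ F G : X, Set.EqOn (toFun F) (toFun G) Ω → F = G
  /-- The polynomials, as elements of `X`. -/
  poly : MvPolynomial (Fin d) ℂ →ₗ[ℂ] X
  poly_eval : ∀ (P : MvPolynomial (Fin d) ℂ), ∀ z ∈ Ω,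
    toFun (poly P) z = MvPolynomial.eval z P
  /-- (P1): polynomials are dense in `X`. -/
  dense_poly : Dense (Set.range fun P : MvPolynomial (Fin d) ℂ => poly P)
  /-- (P2): point evaluations at points of `Ω` are continuous. -/
  eval_cont : ∀ z ∈ Ω, Continuous fun F : X => toFun F z
  /-- Multiplication by a polynomial, a continuous linear self map of `X`;
  (P3) is the special case of the shifts `mul (X j)`. -/
  mul : MvPolynomial (Fin d) ℂ → X →L[ℂ] X
  mul_eval : ∀ (P : MvPolynomial (Fin d) ℂ) (F : X), ∀ z ∈ Ω,
    toFun (mul P F) z = MvPolynomial.eval z P * toFun F z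

namespace HoloFunSpace

variable {d : ℕ} {Ω : Set (Fin d → ℂ)} {X : Type*}
  [AddCommGroup X] [Module ℂ X] [TopologicalSpace X]

/-- The maximal domain `Ω_max`: all `w ∈ ℂ^d` such that evaluation at `w`, defined on
polynomials, extends to a continuous linear functional on `X`. -/
def maxDomain (H : HoloFunSpace d Ω X) : Set (Fin d → ℂ) :=
  {w | ∃ Λ : X →L[ℂ] ℂ, ∀ P : MvPolynomial (Fin d) ℂ, Λ (H.poly P) = MvPolynomial.eval w P}

/-- The invariant subspace `S[F]`: the closure of `{P · F : P ∈ 𝒫_d}`. -/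
def invSub (H : HoloFunSpace d Ω X) (F : X) : Set X :=
  closure (Set.range fun P : MvPolynomial (Fin d) ℂ => H.mul P F)

/-- `F` is cyclic if `S[F] = X`. -/
def Cyclic (H : HoloFunSpace d Ω X) (F : X) : Prop := H.invSub F = Set.univ

/-- The joint invariant subspace `S[𝓕]`: the closed linear span of `⋃_{F ∈ 𝓕} S[F]`. -/
def jointInvSub (H : HoloFunSpace d Ω X) (𝓕 : Set X) : Set X :=
  closure (Submodule.span ℂ (⋃ F ∈ 𝓕, H.invSub F) : Set X)

/-- A family `𝓕` is jointly cyclic if `S[𝓕] = X`. -/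
def JointlyCyclic (H : HoloFunSpace d Ω X) (𝓕 : Set X) : Prop :=
  H.jointInvSub 𝓕 = Set.univ

end HoloFunSpace


/-!
Since `P · F` lies both in `S[F]` and, by density of the polynomials, in `S[P]`, we get
`S[P F] ⊆ S[P] ∩ S[F]`, which gives the forward implication. Conversely, density also gives
`S[P] = closure (P · X)`, and if `𝓕` is jointly cyclic then, by continuity of multiplication
by `P`, `P · X = P · S[𝓕] ⊆ S[𝒬𝓕]`; so `S[𝒬] ⊆ S[𝒬𝓕]`.
-/

section ClosedSpan

variable {R M N : Type*} [Semiring R] [AddCommMonoid M] [Module R M] [TopologicalSpace M]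
  [AddCommMonoid N] [Module R N] [TopologicalSpace N]

lemma Set.MapsTo.closure_span {T : M →L[R] N} {s : Set M} {p : Submodule R N}
    (hp : IsClosed (p : Set N)) (h : Set.MapsTo T s p) :
    Set.MapsTo T (closure (Submodule.span R s : Set M)) p := by
  have hspan : Set.MapsTo T (Submodule.span R s : Set M) p :=
    (Submodule.span_le (p := p.comap (T : M →ₗ[R] N))).mpr h
  simpa only [hp.closure_eq] using hspan.closure T.continuous

end ClosedSpan

namespace HoloFunSpace

variable {d : ℕ} {Ω : Set (Fin d → ℂ)} {X : Type*}
  [AddCommGroup X] [Module ℂ X] [TopologicalSpace X] (H : HoloFunSpace d Ω X)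

lemma mul_mul (P Q : MvPolynomial (Fin d) ℂ) (F : X) :
    H.mul P (H.mul Q F) = H.mul (P * Q) F :=
  H.inj _ _ fun z hz => by
    rw [H.mul_eval _ _ z hz, H.mul_eval _ _ z hz, H.mul_eval _ _ z hz, map_mul, mul_assoc]

lemma mul_mul_comm (P Q : MvPolynomial (Fin d) ℂ) (F : X) :
    H.mul P (H.mul Q F) = H.mul Q (H.mul P F) := by
  rw [H.mul_mul, H.mul_mul, mul_comm]

lemma mul_poly_comm (P Q : MvPolynomial (Fin d) ℂ) :
    H.mul P (H.poly Q) = H.mul Q (H.poly P) :=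
  H.inj _ _ fun z hz => by
    rw [H.mul_eval _ _ z hz, H.mul_eval _ _ z hz, H.poly_eval _ z hz, H.poly_eval _ z hz,
      mul_comm]

lemma invSub_mul_subset (P : MvPolynomial (Fin d) ℂ) (F : X) :
    H.invSub (H.mul P F) ⊆ H.invSub F :=
  closure_minimal
    (Set.range_subset_iff.mpr fun Q => subset_closure ⟨Q * P, (H.mul_mul Q P F).symm⟩)
    isClosed_closure

lemma mapsTo_mul_invSub (P : MvPolynomial (Fin d) ℂ) (F : X) :
    Set.MapsTo (H.mul P) (H.invSub F) (H.invSub (H.mul P F)) := by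
  refine Set.MapsTo.closure (t := Set.range fun Q => H.mul Q (H.mul P F)) ?_ (H.mul P).continuous
  rintro _ ⟨Q, rfl⟩
  exact ⟨Q, H.mul_mul_comm Q P F⟩

lemma invSub_subset_of_mem {F G : X} (hG : G ∈ H.invSub F) : H.invSub G ⊆ H.invSub F :=
  closure_minimal (Set.range_subset_iff.mpr fun Q =>
    H.invSub_mul_subset Q F (H.mapsTo_mul_invSub Q F hG)) isClosed_closure

lemma invSub_poly (P : MvPolynomial (Fin d) ℂ) :
    H.invSub (H.poly P) = closure (Set.range (H.mul P)) := by
  have hrange :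
      Set.range (fun Q => H.mul Q (H.poly P)) = Set.range fun Q => H.mul P (H.poly Q) := by
    simp only [H.mul_poly_comm]
  refine (closure_mono ?_).antisymm ?_
  · rw [hrange]
    exact Set.range_comp_subset_range _ _
  · refine closure_minimal ?_ isClosed_closure
    rintro _ ⟨F, rfl⟩
    have hpoly : Set.MapsTo (H.mul P) (Set.range fun Q => H.poly Q)
        (Set.range fun Q => H.mul Q (H.poly P)) := by
      rintro _ ⟨Q, rfl⟩
      exact hrange ▸ ⟨Q, rfl⟩
    exact hpoly.closure (H.mul P).continuous (H.dense_poly F)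

lemma invSub_mul_subset_invSub_poly (P : MvPolynomial (Fin d) ℂ) (F : X) :
    H.invSub (H.mul P F) ⊆ H.invSub (H.poly P) :=
  H.invSub_subset_of_mem (H.invSub_poly P ▸ subset_closure ⟨F, rfl⟩)

lemma isClosed_jointInvSub (𝓕 : Set X) : IsClosed (H.jointInvSub 𝓕) := isClosed_closure

lemma invSub_subset_jointInvSub {𝓕 : Set X} {F : X} (hF : F ∈ 𝓕) :
    H.invSub F ⊆ H.jointInvSub 𝓕 :=
  (Set.subset_biUnion_of_mem hF).trans (Submodule.subset_span.trans subset_closure)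

variable [IsTopologicalAddGroup X] [ContinuousSMul ℂ X]

lemma mapsTo_jointInvSub (T : X →L[ℂ] X) {𝓕 𝒢 : Set X}
    (h : ∀ F ∈ 𝓕, Set.MapsTo T (H.invSub F) (H.jointInvSub 𝒢)) :
    Set.MapsTo T (H.jointInvSub 𝓕) (H.jointInvSub 𝒢) :=
  Set.MapsTo.closure_span (p := (Submodule.span ℂ _).topologicalClosure)
    (H.isClosed_jointInvSub 𝒢) (Set.mapsTo_iUnion₂.mpr h)

variable {H} in
lemma JointlyCyclic.mono {𝓕 𝒢 : Set X} (h𝓕 : H.JointlyCyclic 𝓕)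
    (h : ∀ F ∈ 𝓕, H.invSub F ⊆ H.jointInvSub 𝒢) : H.JointlyCyclic 𝒢 :=
  Set.eq_univ_of_univ_subset (h𝓕 ▸ H.mapsTo_jointInvSub (ContinuousLinearMap.id ℂ X) h)

end HoloFunSpace

open HoloFunSpace in
theorem jointlyCyclic_mul_iff_general
    {d : ℕ} {Ω : Set (Fin d → ℂ)} {X : Type*}
    [AddCommGroup X] [Module ℂ X] [TopologicalSpace X]
    [IsTopologicalAddGroup X] [ContinuousSMul ℂ X]
    (H : HoloFunSpace d Ω X)
    (𝒬 : Set (MvPolynomial (Fin d) ℂ)) (𝓕 : Set X) :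
    H.JointlyCyclic {G : X | ∃ P ∈ 𝒬, ∃ F ∈ 𝓕, G = H.mul P F} ↔
      (H.JointlyCyclic (H.poly '' 𝒬) ∧ H.JointlyCyclic 𝓕) := by
  set 𝒬𝓕 := {G : X | ∃ P ∈ 𝒬, ∃ F ∈ 𝓕, G = H.mul P F}
  constructor
  · intro h
    refine ⟨h.mono ?_, h.mono ?_⟩ <;> rintro _ ⟨P, hP, F, hF, rfl⟩
    · exact (H.invSub_mul_subset_invSub_poly P F).trans
        (H.invSub_subset_jointInvSub ⟨P, hP, rfl⟩)
    · exact (H.invSub_mul_subset P F).trans (H.invSub_subset_jointInvSub hF)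
  · rintro ⟨h𝒬, h𝓕⟩
    refine h𝒬.mono ?_
    rintro _ ⟨P, hP, rfl⟩
    have hmaps : Set.MapsTo (H.mul P) (H.jointInvSub 𝓕) (H.jointInvSub 𝒬𝓕) :=
      H.mapsTo_jointInvSub _ fun F hF => (H.mapsTo_mul_invSub P F).mono_right
        (H.invSub_subset_jointInvSub ⟨P, hP, F, hF, rfl⟩)
    rw [H.invSub_poly]
    refine closure_minimal (Set.range_subset_iff.mpr fun F => hmaps ?_) (H.isClosed_jointInvSub _)
    exact h𝓕 ▸ Set.mem_univ F

open HoloFunSpace in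
/-- For a family of polynomials `𝒬 ⊆ 𝒫_d` and a family `𝓕 ⊆ X`,
the family `𝒬𝓕 = {P·F : P ∈ 𝒬, F ∈ 𝓕}` is jointly cyclic if and only if both `𝒬`
and `𝓕` are jointly cyclic. -/
theorem jointlyCyclic_mul_iff
    {d : ℕ} {Ω : Set (Fin d → ℂ)} {X : Type*}
    [AddCommGroup X] [Module ℂ X] [TopologicalSpace X]
    [IsTopologicalAddGroup X] [ContinuousSMul ℂ X] [T2Space X]
    (hΩ : IsOpen Ω) (H : HoloFunSpace d Ω X)
    (𝒬 : Set (MvPolynomial (Fin d) ℂ)) (𝓕 : Set X) :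
    H.JointlyCyclic {G : X | ∃ P ∈ 𝒬, ∃ F ∈ 𝓕, G = H.mul P F} ↔
      (H.JointlyCyclic (H.poly '' 𝒬) ∧ H.JointlyCyclic 𝓕) :=
  jointlyCyclic_mul_iff_general H 𝒬 𝓕
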